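/- If δ > 0, S ⊆ ℤ is measure expanding, E ⊆ ℤ is a set of δ-recurrence, and B ⊆ ℤ is a Bohr set Bohr(α,η) for some d ∈ ℕ, α ∈ 𝕋^d and η > 0, then S ∩ (E + B) is a set of δ-recurrence, where E + B := {e + b : e ∈ E, b ∈ B}. -/

import Mathlib

/-- A measure preserving system: a probability space `(X, μ)` together with an
invertible measure preserving transformation `T : X → X`. -/
structure MPSystem where
  X : Type
  [mX : MeasurableSpace X]
  μ : MeasureTheory.Measure X
  prob : MeasureTheory.IsProbabilityMeasure μ
  T : X ≃ᵐ X
  mp : MeasureTheory.MeasurePreserving T μ μ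

attribute [instance] MPSystem.mX

open MeasureTheory Filter

namespace MPSystem

/-- The `n`-th iterate `Tⁿ` of the transformation, for `n : ℤ`. -/
def iter (𝒮 : MPSystem) (n : ℤ) : 𝒮.X → 𝒮.X :=
  fun x => ((𝒮.T.toEquiv : Equiv.Perm 𝒮.X) ^ n) x

/-- The system is ergodic: every measurable `D` with `μ(D △ T⁻¹D) = 0` has measure `0` or `1`. -/
def IsErgodic (𝒮 : MPSystem) : Prop :=
  ∀ D : Set 𝒮.X, MeasurableSet D → 𝒮.μ (symmDiff D (𝒮.T ⁻¹' D)) = 0 →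
    𝒮.μ D = 0 ∨ 𝒮.μ D = 1

/-- The product system `(X × X, μ × μ, T × T)`. -/
noncomputable def prod (𝒮 : MPSystem) : MPSystem where
  X := 𝒮.X × 𝒮.X
  μ := 𝒮.μ.prod 𝒮.μ
  prob := by have := 𝒮.prob; infer_instance
  T := 𝒮.T.prodCongr 𝒮.T
  mp := by have := 𝒮.prob; exact 𝒮.mp.prod 𝒮.mp

/-- The system is weak mixing: the product system `(X×X, μ×μ, T×T)` is ergodic. -/
def WeakMixing (𝒮 : MPSystem) : Prop := 𝒮.prod.IsErgodic

/-- The system is nontrivial: some measurable `D` has `μ(D △ T⁻¹D) > 0`. -/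
def Nontrivial (𝒮 : MPSystem) : Prop :=
  ∃ D : Set 𝒮.X, MeasurableSet D ∧ 0 < 𝒮.μ (symmDiff D (𝒮.T ⁻¹' D))

end MPSystem

/-- `S ⊆ ℤ` is a set of recurrence: for every measure preserving system and every
measurable `D` with `μ(D) > 0`, there is `n ∈ S` with `μ(D ∩ TⁿD) > 0`. -/
def IsRecurrenceSet (S : Set ℤ) : Prop :=
  ∀ (𝒮 : MPSystem) (D : Set 𝒮.X), MeasurableSet D → 0 < 𝒮.μ D →
    ∃ n ∈ S, 0 < 𝒮.μ (D ∩ 𝒮.iter n '' D)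

/-- `S ⊆ ℤ` is measure expanding: every translate `S + m` is a set of recurrence. -/
def MeasureExpanding (S : Set ℤ) : Prop :=
  ∀ m : ℤ, IsRecurrenceSet ((fun s => s + m) '' S)

/-- `S` is a set of `δ`-recurrence: for every measure preserving system and every
measurable `D` with `μ(D) > δ`, there is `n ∈ S` with `μ(D ∩ TⁿD) > 0`. -/
def IsDeltaRecurrenceSet (δ : ℝ) (S : Set ℤ) : Prop :=
  ∀ (𝒮 : MPSystem) (D : Set 𝒮.X), MeasurableSet D → ENNReal.ofReal δ < 𝒮.μ D →
    ∃ n ∈ S, 0 < 𝒮.μ (D ∩ 𝒮.iter n '' D)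

/-- `S` (an infinite set) is a set of rigidity for the system `𝒮`:
for every measurable `D` and every `ε > 0`, `{n ∈ S : μ(D △ TⁿD) > ε}` is finite. -/
def IsRigiditySetFor (S : Set ℤ) (𝒮 : MPSystem) : Prop :=
  S.Infinite ∧ ∀ D : Set 𝒮.X, MeasurableSet D → ∀ ε : ℝ, 0 < ε →
    {n ∈ S | ENNReal.ofReal ε < 𝒮.μ (symmDiff D (𝒮.iter n '' D))}.Finite

/-- `S` is a set of strong recurrence. -/
def IsStrongRecurrenceSet (S : Set ℤ) : Prop :=
  ∀ (𝒮 : MPSystem) (D : Set 𝒮.X), MeasurableSet D → 0 < 𝒮.μ D →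
    ∃ c : ℝ, 0 < c ∧ {n ∈ S | ENNReal.ofReal c < 𝒮.μ (D ∩ 𝒮.iter n '' D)}.Infinite

/-- `S` is a set of strong recurrence for weak mixing systems. -/
def IsStrongRecurrenceSetForWeakMixing (S : Set ℤ) : Prop :=
  ∀ (𝒮 : MPSystem), 𝒮.WeakMixing → ∀ (D : Set 𝒮.X), MeasurableSet D → 0 < 𝒮.μ D →
    ∃ c : ℝ, 0 < c ∧ {n ∈ S | ENNReal.ofReal c < 𝒮.μ (D ∩ 𝒮.iter n '' D)}.Infinite

/-- The circle group `𝕋 = ℝ/ℤ`. -/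
abbrev 𝕋 : Type := UnitAddCircle

/-- The character `e : 𝕋 → S¹ ⊆ ℂ`, `e(x) = exp(2πi x̃)` where `x̃` is a real
representative of `x`. -/
noncomputable def e (x : 𝕋) : ℂ := (AddCircle.toCircle x : ℂ)

/-- A tuple `α ∈ 𝕋^d` is independent if the only integer solution of
`n₁α₁ + ⋯ + n_dα_d = 0` is `n₁ = ⋯ = n_d = 0`. -/
def IndepTuple {d : ℕ} (α : Fin d → 𝕋) : Prop :=
  ∀ n : Fin d → ℤ, (∑ j, n j • α j) = 0 → ∀ j, n j = 0

/-- The Bohr set `Bohr(α, η) = {n ∈ ℤ : max_j ‖nαⱼ‖ < η}`. -/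
def BohrSet {d : ℕ} (α : Fin d → 𝕋) (η : ℝ) : Set ℤ :=
  {n : ℤ | ∀ j, ‖n • α j‖ < η}

/-- The Bohr–Hamming neighborhood `BH(α; ε, η) = {n ∈ ℤ : #{j : ‖nαⱼ‖ < ε} ≥ (1-η)d}`. -/
def BHNbhd {d : ℕ} (α : Fin d → 𝕋) (ε η : ℝ) : Set ℤ :=
  {n : ℤ | (1 - η) * d ≤ ({j : Fin d | ‖n • α j‖ < ε}.ncard : ℝ)}

/-- The upper Banach density of `A ⊆ ℤ`:
`d*(A) = lim_k sup_n |A ∩ {n+1,…,n+k}|/k` (realized as a `limsup`). -/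
noncomputable def upperBanachDensity (A : Set ℤ) : ℝ :=
  Filter.limsup
    (fun k : ℕ => ⨆ n : ℤ, ((A ∩ Set.Icc (n + 1) (n + k)).ncard : ℝ) / k) Filter.atTop

/-!
Take `m ∈ E` with `μ(D ∩ TᵐD) > 0` and put `D' = D ∩ TᵐD`. The translate `S - m` is a set of
recurrence, and a set of recurrence stays one after intersecting with a Bohr set: recurrence for
`D' × U` in the product of the system with the rotation by `α` on `𝕋^d`, where `U` is the ball of
radius `η/2` about `0`, gives a time `k` that returns `U` to itself, so `‖kα‖ < η`. Then
`n = k + m` lies in `S ∩ (E + B)` and `D' ∩ TᵏD' ⊆ D ∩ TⁿD`.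
-/

namespace Equiv.Perm

def prodCongrHom (α β : Type*) : Perm α × Perm β →* Perm (α × β) where
  toFun p := p.1.prodCongr p.2
  map_one' := rfl
  map_mul' _ _ := rfl

theorem prodCongr_zpow {α β : Type*} (e : Perm α) (f : Perm β) (n : ℤ) :
    (e.prodCongr f : Perm (α × β)) ^ n = (e ^ n).prodCongr (f ^ n) :=
  (map_zpow (prodCongrHom α β) (e, f) n).symm

end Equiv.Perm

attribute [instance] MPSystem.prob

namespace MPSystem

variable (𝒮 𝒯 : MPSystem)

theorem iter_add (a b : ℤ) : 𝒮.iter (a + b) = 𝒮.iter a ∘ 𝒮.iter b := by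
  funext x
  simp only [iter, zpow_add, Equiv.Perm.mul_apply, Function.comp_apply]

theorem iter_one : 𝒮.iter 1 = 𝒮.T := by
  funext x
  simp [iter]

theorem iter_neg_one : 𝒮.iter (-1) = 𝒮.T.symm := by
  funext x
  simp [iter]

theorem measurable_iter (n : ℤ) : Measurable (𝒮.iter n) := by
  induction n using Int.induction_on with
  | zero => exact measurable_id
  | succ k ih => rw [iter_add, iter_one]; exact ih.comp 𝒮.T.measurable
  | pred k ih => rw [sub_eq_add_neg, iter_add, iter_neg_one]; exact ih.comp 𝒮.T.symm.measurable

theorem image_iter_eq_preimage (n : ℤ) (D : Set 𝒮.X) : 𝒮.iter n '' D = 𝒮.iter (-n) ⁻¹' D := by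
  show ⇑(𝒮.T.toEquiv ^ n) '' D = ⇑(𝒮.T.toEquiv ^ (-n)) ⁻¹' D
  rw [Equiv.image_eq_preimage_symm, zpow_neg]
  rfl

theorem measurableSet_image_iter (n : ℤ) {D : Set 𝒮.X} (hD : MeasurableSet D) :
    MeasurableSet (𝒮.iter n '' D) := by
  rw [image_iter_eq_preimage]
  exact 𝒮.measurable_iter (-n) hD

noncomputable def product : MPSystem where
  X := 𝒮.X × 𝒯.X
  μ := 𝒮.μ.prod 𝒯.μ
  prob := inferInstance
  T := 𝒮.T.prodCongr 𝒯.T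
  mp := 𝒮.mp.prod 𝒯.mp

theorem product_iter (n : ℤ) : (𝒮.product 𝒯).iter n = Prod.map (𝒮.iter n) (𝒯.iter n) := by
  funext p
  show ⇑((𝒮.T.toEquiv.prodCongr 𝒯.T.toEquiv) ^ n) p = _
  rw [Equiv.Perm.prodCongr_zpow]
  rfl

theorem product_measure_prod_inter_image_iter (n : ℤ) (A : Set 𝒮.X) (B : Set 𝒯.X) :
    (𝒮.product 𝒯).μ (A ×ˢ B ∩ (𝒮.product 𝒯).iter n '' (A ×ˢ B)) =
      𝒮.μ (A ∩ 𝒮.iter n '' A) * 𝒯.μ (B ∩ 𝒯.iter n '' B) := by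
  rw [product_iter]
  show 𝒮.μ.prod 𝒯.μ (A ×ˢ B ∩ Prod.map (𝒮.iter n) (𝒯.iter n) '' (A ×ˢ B)) = _
  rw [Set.prodMap_image_prod, Set.prod_inter_prod]
  exact Measure.prod_prod _ _

section Rotation

variable {G : Type} [AddGroup G] [MeasurableSpace G] [MeasurableAdd G]
  (μ : Measure G) [IsProbabilityMeasure μ] [μ.IsAddRightInvariant] (a : G)

noncomputable def rotation : MPSystem where
  X := G
  μ := μ
  prob := inferInstance
  T := MeasurableEquiv.addRight a
  mp := measurePreserving_add_right μ a

theorem rotation_iter (n : ℤ) (x : G) : (rotation μ a).iter n x = x + n • a := by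
  show ⇑(Equiv.addRight a ^ n) x = _
  rw [Equiv.zsmul_addRight]
  rfl

end Rotation

end MPSystem

theorem IsRecurrenceSet.exists_mem_measure_inter_image_iter_pos {R : Set ℤ}
    (hR : IsRecurrenceSet R) (𝒮 𝒯 : MPSystem) {A : Set 𝒮.X} {B : Set 𝒯.X}
    (hA : MeasurableSet A) (hB : MeasurableSet B) (hμA : 0 < 𝒮.μ A) (hμB : 0 < 𝒯.μ B) :
    ∃ n ∈ R, 0 < 𝒮.μ (A ∩ 𝒮.iter n '' A) ∧ 0 < 𝒯.μ (B ∩ 𝒯.iter n '' B) := by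
  have hμAB : 0 < (𝒮.product 𝒯).μ (A ×ˢ B) :=
    (Measure.prod_prod A B).trans_gt (ENNReal.mul_pos hμA.ne' hμB.ne')
  obtain ⟨n, hn, hpos⟩ := hR (𝒮.product 𝒯) (A ×ˢ B) (hA.prod hB) hμAB
  rw [MPSystem.product_measure_prod_inter_image_iter] at hpos
  exact ⟨n, hn, CanonicallyOrderedAdd.mul_pos.mp hpos⟩

theorem mem_bohrSet_iff {d : ℕ} {α : Fin d → 𝕋} {η : ℝ} (hη : 0 < η) {n : ℤ} :
    n ∈ BohrSet α η ↔ ‖n • α‖ < η :=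
  (pi_norm_lt_iff hη).symm

instance UnitAddCircle.isProbabilityMeasure_volume : IsProbabilityMeasure (volume : Measure 𝕋) :=
  ⟨UnitAddCircle.measure_univ⟩

theorem IsRecurrenceSet.inter_bohrSet {R : Set ℤ} (hR : IsRecurrenceSet R) {d : ℕ}
    (α : Fin d → 𝕋) {η : ℝ} (hη : 0 < η) : IsRecurrenceSet (R ∩ BohrSet α η) := by
  intro 𝒮 D hD hμD
  set U : Set (Fin d → 𝕋) := Metric.ball 0 (η / 2)
  have hμU : 0 < volume U := Metric.isOpen_ball.measure_pos _ ⟨0, by simpa using half_pos hη⟩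
  obtain ⟨n, hnR, hμ, hUret⟩ := hR.exists_mem_measure_inter_image_iter_pos 𝒮
    (MPSystem.rotation volume α) hD (measurableSet_ball : MeasurableSet U) hμD hμU
  obtain ⟨_, hy, (x : Fin d → 𝕋), hxU, rfl⟩ := nonempty_of_measure_ne_zero hUret.ne'
  have hyU : x + n • α ∈ U := by rw [← MPSystem.rotation_iter volume α n x]; exact hy
  refine ⟨n, ⟨hnR, (mem_bohrSet_iff hη).2 ?_⟩, hμ⟩
  calc ‖n • α‖ = dist (x + n • α) x := by simp
    _ ≤ dist (x + n • α) 0 + dist x 0 := dist_triangle_right _ _ _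
    _ < η / 2 + η / 2 := add_lt_add hyU hxU
    _ = η := add_halves η

theorem measureExpanding_inter_sumset_bohr_deltaRecurrence_general
    (δ : ℝ) (S E : Set ℤ) (hS : MeasureExpanding S)
    (hE : IsDeltaRecurrenceSet δ E) (d : ℕ) (α : Fin d → 𝕋) (η : ℝ) (hη : 0 < η) :
    IsDeltaRecurrenceSet δ (S ∩ Set.image2 (fun x y => x + y) E (BohrSet α η)) := by
  intro 𝒮 D hD hμD
  obtain ⟨m, hmE, hm⟩ := hE 𝒮 D hD hμD
  obtain ⟨k, ⟨⟨s, hsS, hsk⟩, hkB⟩, hk⟩ := (hS (-m)).inter_bohrSet α hη 𝒮 _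
    (hD.inter (𝒮.measurableSet_image_iter m hD)) hm
  have hkm : k + m = s := by rw [← hsk]; ring
  refine ⟨k + m, ⟨hkm ▸ hsS, m, hmE, k, hkB, add_comm _ _⟩, hk.trans_le ?_⟩
  refine measure_mono (Set.inter_subset_inter Set.inter_subset_left ?_)
  rw [𝒮.iter_add, Set.image_comp]
  exact Set.image_mono Set.inter_subset_right

/-- **Corollary.** If `δ > 0`, `S` is measure expanding, `E` is a set of `δ`-recurrence,
and `B = Bohr(α,η)` is a Bohr set, then `S ∩ (E + B)` is a set of `δ`-recurrence. -/
theorem measureExpanding_inter_sumset_bohr_deltaRecurrence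
    (δ : ℝ) (hδ : 0 < δ) (S E : Set ℤ) (hS : MeasureExpanding S)
    (hE : IsDeltaRecurrenceSet δ E) (d : ℕ) (α : Fin d → 𝕋) (η : ℝ) (hη : 0 < η) :
    IsDeltaRecurrenceSet δ (S ∩ Set.image2 (fun x y => x + y) E (BohrSet α η)) :=
  measureExpanding_inter_sumset_bohr_deltaRecurrence_general δ S E hS hE d α η hη
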